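/- Let s > 0, r > 0, α > 1+2r, γ > 0, and suppose 1/2 ≤ β ≤ 2 where β = log α / (log α - log(1+2r) + r(1+r)/(6(1+2r))). Let h be the piecewise function on [(1+r/6)s, α(1+r/6)s] defined by: h(t) = 0 on [(1+r/6)s, (1+11r/6)s]; h(t) = 6γβ·(t-(1+11r/6)s)/((1+2r)·r·s²) on [(1+11r/6)s, (1+2r)s]; h(t) = γβ/t on [(1+2r)s, αs]; h(t) = 6γβ·(α(1+r/6)s - t)/(α²·r·s²) on [αs, α(1+r/6)s]. Then: (i) 0 ≤ h(t) ≤ 2(1+r/6)γ/t for every t in the interval; (ii) if g is positive on the interval with g'/g = h and g((1+r/6)s) = ((1+r/6)s)^γ, then α^{-γ}·t^γ ≤ g(t) ≤ α^γ·t^γ for every t in the interval. -/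

import Mathlib

/-!
On each of the four pieces of the period `[a, αa]`, `a = (1+r/6)s`, the function `h` is the
derivative of an explicit function (zero, a quadratic, `γβ log t`, a quadratic), so `g` gets
multiplied there by the exponential of its increment. The four increments add up to
`γβ (log α - log (1+2r) + r(1+r)/(6(1+2r))) = γ log α`, which is what the choice of `β` achieves,
so `g(αa) = α^γ g(a) = (αa)^γ`. Since `h ≥ 0`, `g` is monotone and thus lies between `a^γ` and
`(αa)^γ`, which for `t ∈ [a, αa]` gives the two bounds.
-/

open Real

/-- The piecewise logarithmic derivative `h = g'/g` of the warping function `g` on one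
period `[(1+r/6)s, α(1+r/6)s]` of the construction. -/
noncomputable def hpiece (s r α γ β : ℝ) : ℝ → ℝ := fun t =>
  if t ≤ (1 + 11*r/6) * s then 0
  else if t ≤ (1 + 2*r) * s then
    6*γ*β * (t - (1 + 11*r/6) * s) / ((1 + 2*r) * r * s^2)
  else if t ≤ α * s then γ*β / t
  else 6*γ*β * (α * (1 + r/6) * s - t) / (α^2 * r * s^2)

open Set

theorem eq_mul_exp_sub_of_hasDerivAt {g F φ : ℝ → ℝ} {p q : ℝ} (hpq : p ≤ q)
    (hg : ∀ x ∈ Icc p q, HasDerivAt g (φ x * g x) x)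
    (hF : ∀ x ∈ Icc p q, HasDerivAt F (φ x) x) :
    g q = g p * exp (F q - F p) := by
  have hderiv : ∀ x ∈ Icc p q, HasDerivAt (fun y => g y * exp (-F y)) 0 x := fun x hx =>
    ((hg x hx).mul (hF x hx).neg.exp).congr_deriv (by ring)
  have hconst := constant_of_has_deriv_right_zero
    (fun x hx => (hderiv x hx).continuousAt.continuousWithinAt)
    (fun x hx => (hderiv x (Ico_subset_Icc_self hx)).hasDerivWithinAt) q ⟨hpq, le_rfl⟩
  calc g q = g q * exp (-F q) * exp (F q) := by
        rw [mul_assoc, ← exp_add, neg_add_cancel, exp_zero, mul_one]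
    _ = g p * exp (F q - F p) := by rw [hconst, mul_assoc, ← exp_add, neg_add_eq_sub]

theorem monotoneOn_of_hasDerivAt_mul {g φ : ℝ → ℝ} {p q : ℝ}
    (hg : ∀ x ∈ Icc p q, HasDerivAt g (φ x * g x) x)
    (hφ : ∀ x ∈ Icc p q, 0 ≤ φ x) (hpos : ∀ x ∈ Icc p q, 0 < g x) :
    MonotoneOn g (Icc p q) :=
  monotoneOn_of_hasDerivWithinAt_nonneg (convex_Icc p q)
    (fun x hx => (hg x hx).continuousAt.continuousWithinAt)
    (fun x hx => (hg x (interior_subset hx)).hasDerivWithinAt)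
    (fun x hx => mul_nonneg (hφ x (interior_subset hx)) (hpos x (interior_subset hx)).le)

section hpiece

variable {s r α γ β t : ℝ}

theorem hpiece_eq_zero_of_le (ht : t ≤ (1 + 11*r/6) * s) : hpiece s r α γ β t = 0 :=
  if_pos ht

theorem hpiece_eq_of_mem_Icc_rising (ht : t ∈ Icc ((1 + 11*r/6) * s) ((1 + 2*r) * s)) :
    hpiece s r α γ β t = 6*γ*β * (t - (1 + 11*r/6) * s) / ((1 + 2*r) * r * s^2) := by
  unfold hpiece
  by_cases h : t ≤ (1 + 11*r/6) * s
  · rw [if_pos h, le_antisymm h ht.1, sub_self, mul_zero, zero_div]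
  · rw [if_neg h, if_pos ht.2]

theorem hpiece_eq_of_mem_Icc_middle (hs : 0 < s) (hr : 0 < r)
    (ht : t ∈ Icc ((1 + 2*r) * s) (α * s)) :
    hpiece s r α γ β t = γ*β / t := by
  have h₁ : ¬ t ≤ (1 + 11*r/6) * s := by nlinarith [ht.1]
  unfold hpiece
  rw [if_neg h₁]
  by_cases h₂ : t ≤ (1 + 2*r) * s
  · rw [if_pos h₂, le_antisymm h₂ ht.1]; field_simp; ring
  · rw [if_neg h₂, if_pos ht.2]

theorem hpiece_eq_of_le_falling (hs : 0 < s) (hr : 0 < r) (hα : 1 + 2*r < α)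
    (ht : α * s ≤ t) :
    hpiece s r α γ β t = 6*γ*β * (α * (1 + r/6) * s - t) / (α^2 * r * s^2) := by
  have hαs : (1 + 2*r) * s < α * s := by nlinarith
  have hα₀ : 0 < α := by linarith
  unfold hpiece
  split_ifs with h₁ h₂ h₃
  · nlinarith
  · linarith
  · rw [le_antisymm h₃ ht]; field_simp; ring
  · rfl

theorem hpiece_nonneg (hs : 0 < s) (hr : 0 < r) (hγ : 0 ≤ γ) (hβ : 0 ≤ β)
    (ht : t ≤ α * (1 + r/6) * s) : 0 ≤ hpiece s r α γ β t := by
  unfold hpiece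
  split_ifs with h₁ h₂ h₃
  · exact le_rfl
  · exact div_nonneg (mul_nonneg (by positivity) (by linarith)) (by positivity)
  · exact div_nonneg (by positivity) (by nlinarith)
  · exact div_nonneg (mul_nonneg (by positivity) (by linarith)) (by positivity)

theorem hpiece_le (hs : 0 < s) (hr : 0 < r) (hγ : 0 ≤ γ) (hβ₀ : 0 ≤ β) (hβ₂ : β ≤ 2)
    (ht : t ∈ Icc ((1 + r/6) * s) (α * (1 + r/6) * s)) :
    hpiece s r α γ β t ≤ 2 * (1 + r/6) * γ / t := by
  have ht₀ : 0 < t := lt_of_lt_of_le (by positivity) ht.1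
  have hβγ : γ*β ≤ 2 * (1 + r/6) * γ := by nlinarith
  unfold hpiece
  split_ifs with h₁ h₂ h₃
  · positivity
  · calc 6*γ*β * (t - (1 + 11*r/6) * s) / ((1 + 2*r) * r * s^2)
        ≤ 6*γ*β * (r * s / 6) / ((1 + 2*r) * r * s^2) := by gcongr; linarith
      _ = γ*β / ((1 + 2*r) * s) := by field_simp
      _ ≤ γ*β / t := by gcongr
      _ ≤ 2 * (1 + r/6) * γ / t := by gcongr
  · gcongr
  · have hα₀ : 0 < α :=
      (pos_iff_pos_of_mul_pos (show 0 < α * ((1 + r/6) * s) by linarith [ht.2])).2 (by positivity)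
    calc 6*γ*β * (α * (1 + r/6) * s - t) / (α^2 * r * s^2)
        ≤ 6*γ*β * (α * r * s / 6) / (α^2 * r * s^2) := by gcongr; linarith
      _ = γ*β / (α * s) := by field_simp
      _ ≤ γ * 2 / (α * s) := by gcongr
      _ = 2 * (1 + r/6) * γ / (α * (1 + r/6) * s) := by field_simp
      _ ≤ 2 * (1 + r/6) * γ / t := by gcongr; exact ht.2

theorem apply_eq_of_hasDerivAt_flat {g : ℝ → ℝ} (hs : 0 < s) (hr : 0 < r)
    (hg : ∀ x ∈ Icc ((1 + r/6) * s) ((1 + 11*r/6) * s),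
      HasDerivAt g (hpiece s r α γ β x * g x) x) :
    g ((1 + 11*r/6) * s) = g ((1 + r/6) * s) := by
  rw [eq_mul_exp_sub_of_hasDerivAt (F := fun _ => 0) (by nlinarith) hg fun x hx => by
    rw [hpiece_eq_zero_of_le hx.2]; exact hasDerivAt_const x 0]
  simp

theorem apply_eq_mul_exp_of_hasDerivAt_rising {g : ℝ → ℝ} (hs : 0 < s) (hr : 0 < r)
    (hg : ∀ x ∈ Icc ((1 + 11*r/6) * s) ((1 + 2*r) * s),
      HasDerivAt g (hpiece s r α γ β x * g x) x) :
    g ((1 + 2*r) * s) = g ((1 + 11*r/6) * s) * exp (γ*β * (r / (12 * (1 + 2*r)))) := by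
  rw [eq_mul_exp_sub_of_hasDerivAt
    (F := fun x => 3*γ*β * (x - (1 + 11*r/6) * s)^2 / ((1 + 2*r) * r * s^2)) (by nlinarith) hg
    fun x hx => by
      rw [hpiece_eq_of_mem_Icc_rising hx]
      refine (((((hasDerivAt_id x).sub_const _).pow 2).const_mul _).div_const _).congr_deriv ?_
      simp only [id_eq]; ring]
  congr 2
  field_simp
  ring

theorem apply_eq_mul_exp_of_hasDerivAt_middle {g : ℝ → ℝ} (hs : 0 < s) (hr : 0 < r)
    (hα : 1 + 2*r < α)
    (hg : ∀ x ∈ Icc ((1 + 2*r) * s) (α * s), HasDerivAt g (hpiece s r α γ β x * g x) x) :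
    g (α * s) = g ((1 + 2*r) * s) * exp (γ*β * (log α - log (1 + 2*r))) := by
  rw [eq_mul_exp_sub_of_hasDerivAt (F := fun x => γ*β * log x) (by nlinarith) hg fun x hx => by
    rw [hpiece_eq_of_mem_Icc_middle hs hr hx]
    exact ((hasDerivAt_log (by nlinarith [hx.1])).const_mul _).congr_deriv (div_eq_mul_inv _ _).symm]
  rw [log_mul (by linarith) hs.ne', log_mul (by linarith) hs.ne']
  ring_nf

theorem apply_eq_mul_exp_of_hasDerivAt_falling {g : ℝ → ℝ} (hs : 0 < s) (hr : 0 < r)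
    (hα : 1 + 2*r < α)
    (hg : ∀ x ∈ Icc (α * s) (α * (1 + r/6) * s), HasDerivAt g (hpiece s r α γ β x * g x) x) :
    g (α * (1 + r/6) * s) = g (α * s) * exp (γ*β * (r / 12)) := by
  have hα₀ : 0 < α := by linarith
  rw [eq_mul_exp_sub_of_hasDerivAt
    (F := fun x => -(3*γ*β * (α * (1 + r/6) * s - x)^2 / (α^2 * r * s^2)))
    (by nlinarith [mul_pos hα₀ hs]) hg fun x hx => by
      rw [hpiece_eq_of_le_falling hs hr hα hx.1]
      refine ((((hasDerivAt_id x).const_sub _).pow 2).const_mul _).div_const _ |>.neg.congr_deriv ?_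
      simp only [id_eq]; ring]
  congr 2
  field_simp
  ring

theorem apply_period_end_eq_rpow_mul {g : ℝ → ℝ} (hs : 0 < s) (hr : 0 < r) (hα : 1 + 2*r < α)
    (hβ : β * (log α - log (1 + 2*r) + r * (1 + r) / (6 * (1 + 2*r))) = log α)
    (hg : ∀ x ∈ Icc ((1 + r/6) * s) (α * (1 + r/6) * s),
      HasDerivAt g (hpiece s r α γ β x * g x) x) :
    g (α * (1 + r/6) * s) = α ^ γ * g ((1 + r/6) * s) := by
  have hα₀ : 0 < α := by linarith
  have h₀₁ : (1 + r/6) * s ≤ (1 + 11*r/6) * s := by nlinarith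
  have h₁₂ : (1 + 11*r/6) * s ≤ (1 + 2*r) * s := by nlinarith
  have h₂₃ : (1 + 2*r) * s ≤ α * s := by nlinarith
  have h₃₄ : α * s ≤ α * (1 + r/6) * s := by nlinarith [mul_pos hα₀ hs]
  have hsub : ∀ p q, (1 + r/6) * s ≤ p → q ≤ α * (1 + r/6) * s →
      ∀ x ∈ Icc p q, HasDerivAt g (hpiece s r α γ β x * g x) x :=
    fun p q hp hq x hx => hg x ⟨hp.trans hx.1, hx.2.trans hq⟩
  rw [apply_eq_mul_exp_of_hasDerivAt_falling hs hr hα (hsub _ _ (h₀₁.trans (h₁₂.trans h₂₃)) le_rfl),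
    apply_eq_mul_exp_of_hasDerivAt_middle hs hr hα (hsub _ _ (h₀₁.trans h₁₂) h₃₄),
    apply_eq_mul_exp_of_hasDerivAt_rising hs hr (hsub _ _ h₀₁ (h₂₃.trans h₃₄)),
    apply_eq_of_hasDerivAt_flat hs hr (hsub _ _ le_rfl (h₁₂.trans (h₂₃.trans h₃₄))),
    rpow_def_of_pos hα₀, mul_comm (exp _)]
  simp only [mul_assoc, ← exp_add]
  congr 2
  calc _ = γ * (β * (log α - log (1 + 2*r) + r * (1 + r) / (6 * (1 + 2*r)))) := by
        field_simp
        ring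
    _ = log α * γ := by rw [hβ, mul_comm]

end hpiece

theorem statement_6_general (s r α γ β : ℝ)
    (hs : 0 < s) (hr : 0 < r) (hα : α > 1 + 2*r) (hγ : 0 < γ)
    (hβ : β = Real.log α /
      (Real.log α - Real.log (1 + 2*r) + r * (1 + r) / (6 * (1 + 2*r))))
    (hβ₂ : β ≤ 2) :
    (∀ t ∈ Set.Icc ((1 + r/6) * s) (α * (1 + r/6) * s),
      0 ≤ hpiece s r α γ β t ∧ hpiece s r α γ β t ≤ 2 * (1 + r/6) * γ / t) ∧
    ∀ g : ℝ → ℝ,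
      (∀ t ∈ Set.Icc ((1 + r/6) * s) (α * (1 + r/6) * s), 0 < g t) →
      (∀ t ∈ Set.Icc ((1 + r/6) * s) (α * (1 + r/6) * s),
        HasDerivAt g (hpiece s r α γ β t * g t) t) →
      g ((1 + r/6) * s) = ((1 + r/6) * s) ^ γ →
      ∀ t ∈ Set.Icc ((1 + r/6) * s) (α * (1 + r/6) * s),
        α ^ (-γ) * t ^ γ ≤ g t ∧ g t ≤ α ^ γ * t ^ γ := by
  have hα₀ : 0 < α := by linarith
  have hD : 0 < log α - log (1 + 2*r) + r * (1 + r) / (6 * (1 + 2*r)) := by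
    have := log_lt_log (by linarith) hα
    have : 0 < r * (1 + r) / (6 * (1 + 2*r)) := by positivity
    linarith
  have hβ₀ : 0 ≤ β := hβ ▸ div_nonneg (log_nonneg (by linarith)) hD.le
  refine ⟨fun t ht => ⟨hpiece_nonneg hs hr hγ.le hβ₀ ht.2, hpiece_le hs hr hγ.le hβ₀ hβ₂ ht⟩, ?_⟩
  intro g hpos hg hga t ht
  have hmono := monotoneOn_of_hasDerivAt_mul hg
    (fun x hx => hpiece_nonneg hs hr hγ.le hβ₀ hx.2) hpos
  have hend := apply_period_end_eq_rpow_mul hs hr hα (by rw [hβ, div_mul_cancel₀ _ hD.ne']) hg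
  have ha : 0 < (1 + r/6) * s := by positivity
  have hab : (1 + r/6) * s ≤ α * (1 + r/6) * s := ht.1.trans ht.2
  constructor
  · calc α ^ (-γ) * t ^ γ ≤ α ^ (-γ) * (α * ((1 + r/6) * s)) ^ γ := by
          gcongr
          · exact ha.le.trans ht.1
          · rw [← mul_assoc]; exact ht.2
      _ = ((1 + r/6) * s) ^ γ := by
          rw [mul_rpow hα₀.le ha.le, ← mul_assoc, ← rpow_add hα₀, neg_add_cancel, rpow_zero,
            one_mul]
      _ = g ((1 + r/6) * s) := hga.symm
      _ ≤ g t := hmono ⟨le_rfl, hab⟩ ht ht.1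
  · calc g t ≤ g (α * (1 + r/6) * s) := hmono ht ⟨hab, le_rfl⟩ ht.2
      _ = α ^ γ * ((1 + r/6) * s) ^ γ := by rw [hend, hga]
      _ ≤ α ^ γ * t ^ γ := by gcongr; exact ht.1

/-- (i) `0 ≤ h(t) ≤ 2(1+r/6)γ/t` on the period, and (ii) a positive `g` with
`g'/g = h` and `g((1+r/6)s) = ((1+r/6)s)^γ` satisfies `α^{-γ} t^γ ≤ g(t) ≤ α^γ t^γ`
throughout the period. -/
theorem statement_6 (s r α γ β : ℝ)
    (hs : 0 < s) (hr : 0 < r) (hα : α > 1 + 2*r) (hγ : 0 < γ)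
    (hβ : β = Real.log α /
      (Real.log α - Real.log (1 + 2*r) + r * (1 + r) / (6 * (1 + 2*r))))
    (hβ₁ : 1/2 ≤ β) (hβ₂ : β ≤ 2) :
    (∀ t ∈ Set.Icc ((1 + r/6) * s) (α * (1 + r/6) * s),
      0 ≤ hpiece s r α γ β t ∧ hpiece s r α γ β t ≤ 2 * (1 + r/6) * γ / t) ∧
    ∀ g : ℝ → ℝ,
      (∀ t ∈ Set.Icc ((1 + r/6) * s) (α * (1 + r/6) * s), 0 < g t) →
      (∀ t ∈ Set.Icc ((1 + r/6) * s) (α * (1 + r/6) * s),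
        HasDerivAt g (hpiece s r α γ β t * g t) t) →
      g ((1 + r/6) * s) = ((1 + r/6) * s) ^ γ →
      ∀ t ∈ Set.Icc ((1 + r/6) * s) (α * (1 + r/6) * s),
        α ^ (-γ) * t ^ γ ≤ g t ∧ g t ≤ α ^ γ * t ^ γ :=
  statement_6_general s r α γ β hs hr hα hγ hβ hβ₂
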